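/- arXiv:1601.03186 — 3 statements merged into one kernel-verified Lean document; each statement's English description precedes it below -/
import Mathlib

section
/- Let κ* ∈ (−1, 0]. Then for every y ≥ 0, the value g(y)/(1+κ*) lies in the range (−∞, g(0)] of g, so x(y) := g⁻¹(g(y)/(1+κ*)) is well defined, and there exists a constant K ≥ 0 such that −K ≤ (1/g(y))·g⁻¹(g(y)/(1+κ*)) ≤ 0 for every y ≥ 0; that is, this nonpositive function of y is bounded on [0,∞). -/
/-!
Write `c = 1 + κ*` and `t = -g(y) ≥ -g(0) > 0`. Since `g(y) < 0` and `0 < c ≤ 1`, `g(y)/c ≤ g(y) ≤ g(0)`,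
so `w = g⁻¹(g(y)/c)` exists. From `w^(1+q) ≤ -g(w) = t/c` and `w ≤ 1 + w^(1+q)` we get
`w/t ≤ 1/t + 1/c ≤ 1/(-g(0)) + 1/c`.
-/

open Set

lemma Real.self_le_one_add_rpow {w p : ℝ} (hw : 0 ≤ w) (hp : 1 ≤ p) : w ≤ 1 + w ^ p := by
  rcases le_total w 1 with hw1 | hw1
  · linarith [Real.rpow_nonneg hw p]
  · linarith [Real.self_le_rpow_of_one_le hw1 hp]

section LinearOrderedField

variable {α : Type*} [Field α] [LinearOrder α] [IsStrictOrderedRing α]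

lemma div_le_self_of_neg {a c : α} (ha : a < 0) (hc₀ : 0 < c) (hc₁ : c ≤ 1) : a / c ≤ a := by
  rw [div_le_iff₀ hc₀]
  nlinarith

lemma div_le_one_div_add_one_div {w s t c : α} (hs : 0 < s) (hst : s ≤ t) (hc : 0 < c)
    (hw : w ≤ 1 + t / c) : w / t ≤ 1 / s + 1 / c :=
  have ht : 0 < t := hs.trans_le hst
  calc w / t ≤ (1 + t / c) / t := div_le_div_of_nonneg_right hw ht.le
    _ = 1 / t + 1 / c := by field_simp
    _ ≤ 1 / s + 1 / c := by gcongr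

end LinearOrderedField

theorem stmt_7_general (q : ℝ) (hq : 0 < q) (g : ℝ → ℝ)
    (hg_neg : ∀ y ∈ Ici (0 : ℝ), g y < 0)
    (hg_le : ∀ y ∈ Ici (0 : ℝ), g y ≤ -(y ^ (1 + q)))
    (hbij : Set.BijOn g (Ici 0) (Iic (g 0)))
    (ginv : ℝ → ℝ) (hinv : Set.InvOn ginv g (Ici 0) (Iic (g 0)))
    (κs : ℝ) (hκ₁ : -1 < κs) (hκ₂ : κs ≤ 0) :
    (∀ y ∈ Ici (0 : ℝ), g y / (1 + κs) ≤ g 0) ∧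
      ∃ K : ℝ, 0 ≤ K ∧ ∀ y ∈ Ici (0 : ℝ),
        -K ≤ 1 / g y * ginv (g y / (1 + κs)) ∧ 1 / g y * ginv (g y / (1 + κs)) ≤ 0 := by
  have hc : 0 < 1 + κs := by linarith
  have hg0 : g 0 < 0 := hg_neg 0 self_mem_Ici
  have hmem : ∀ y ∈ Ici (0 : ℝ), g y / (1 + κs) ≤ g 0 := fun y hy =>
    (div_le_self_of_neg (hg_neg y hy) hc (by linarith)).trans (hbij.mapsTo hy)
  refine ⟨hmem, 1 / -g 0 + 1 / (1 + κs), by have := neg_pos.2 hg0; positivity, fun y hy => ?_⟩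
  obtain ⟨w, hw, hgw⟩ := hbij.surjOn (hmem y hy)
  rw [← hgw, hinv.1 hw]
  have hgy : g y < 0 := hg_neg y hy
  have hw_le : w ≤ 1 + -g y / (1 + κs) := by
    linarith [Real.self_le_one_add_rpow hw (by linarith : 1 ≤ 1 + q), hg_le w hw,
      neg_div (1 + κs) (g y)]
  have hratio := div_le_one_div_add_one_div (neg_pos.2 hg0) (neg_le_neg (hbij.mapsTo hy)) hc hw_le
  rw [one_div_mul_eq_div]
  refine ⟨?_, div_nonpos_of_nonneg_of_nonpos hw hgy.le⟩
  simpa only [div_neg, neg_neg] using neg_le_neg hratio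

/-- For `κ* ∈ (−1, 0]`, the value `g(y)/(1+κ*)` lies in the range `(−∞, g(0)]` of `g`,
and the nonpositive function `y ↦ (1/g(y))·g⁻¹(g(y)/(1+κ*))` is bounded on `[0, ∞)`. -/
theorem stmt_7 (q : ℝ) (hq : 0 < q) (g : ℝ → ℝ)
    (hg_cont : ContinuousOn g (Ici 0))
    (hg_anti : StrictAntiOn g (Ici 0))
    (hg_neg : ∀ y ∈ Ici (0 : ℝ), g y < 0)
    (hg_le : ∀ y ∈ Ici (0 : ℝ), g y ≤ -(y ^ (1 + q)))
    (hbij : Set.BijOn g (Ici 0) (Iic (g 0)))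
    (ginv : ℝ → ℝ) (hinv : Set.InvOn ginv g (Ici 0) (Iic (g 0)))
    (κs : ℝ) (hκ₁ : -1 < κs) (hκ₂ : κs ≤ 0) :
    (∀ y ∈ Ici (0 : ℝ), g y / (1 + κs) ≤ g 0) ∧
      ∃ K : ℝ, 0 ≤ K ∧ ∀ y ∈ Ici (0 : ℝ),
        -K ≤ 1 / g y * ginv (g y / (1 + κs)) ∧ 1 / g y * ginv (g y / (1 + κs)) ≤ 0 :=
  stmt_7_general q hq g hg_neg hg_le hbij ginv hinv κs hκ₁ hκ₂
end

section
/- Fix y ≥ 0 and κ > −1 such that g(y)/(1+κ) ≤ g(0), and set u* := g⁻¹(g(y)/(1+κ)) − y. Then u* ≥ −y and u* is a global minimizer on [−y, ∞) of the function u ↦ Θ(y+u) − Θ(y) − (1/g(y))·(1+κ)·u; that is, for every u ≥ −y, Θ(y+u) − (1/g(y))·(1+κ)·u ≥ Θ(y+u*) − (1/g(y))·(1+κ)·u*. -/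
/-!
Since `g` is negative and decreasing, `-1 / g` is antitone, so `Θ` (with `Θ' = 1 / g`) is convex.
With `c = g y / (1 + κ)` the slope `1 / g y * (1 + κ)` is `1 / c = Θ'(x*)` at `x* = g⁻¹ c`, so the claim
is the tangent-line inequality `(x - x*) / c ≤ Θ x - Θ x*` at `x = y + u`; it follows by comparing
`Θ x - Θ x* = ∫_x^{x*} -1 / g` with `(x* - x) · (-1 / g x*)`.
-/

open MeasureTheory Set Filter

theorem AntitoneOn.mul_le_intervalIntegral {f : ℝ → ℝ} {a b : ℝ} (hf : AntitoneOn f (uIcc a b)) :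
    (b - a) * f b ≤ ∫ t in a..b, f t := by
  have hb : b ∈ uIcc a b := right_mem_uIcc
  rcases le_total a b with hab | hba
  · calc (b - a) * f b = ∫ _ in a..b, f b := by simp
      _ ≤ ∫ t in a..b, f t :=
        intervalIntegral.integral_mono_on hab intervalIntegrable_const hf.intervalIntegrable
          fun t ht ↦ hf (Icc_subset_uIcc ht) hb ht.2
  · have : ∫ t in b..a, f t ≤ ∫ _ in b..a, f b :=
      intervalIntegral.integral_mono_on hba (uIcc_comm a b ▸ hf).intervalIntegrable
        intervalIntegrable_const fun t ht ↦ hf hb (Icc_subset_uIcc' ht) ht.1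
    rw [intervalIntegral.integral_symm]
    simp only [intervalIntegral.integral_const, smul_eq_mul] at this
    linarith

section

variable {q : ℝ} {g : ℝ → ℝ}

theorem neg_one_div_isBigO_rpow (hg_le : ∀ y ∈ Ici (0 : ℝ), g y ≤ -(y ^ (1 + q))) :
    (fun u ↦ -1 / g u) =O[atTop] fun u ↦ u ^ (-(1 + q)) := by
  refine Asymptotics.IsBigO.of_bound 1 ?_
  filter_upwards [eventually_gt_atTop 0] with u hu
  have hpow : 0 < u ^ (1 + q) := Real.rpow_pos_of_pos hu _
  have hgu : u ^ (1 + q) ≤ -g u := by linarith [hg_le u hu.le]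
  rw [one_mul, norm_div, norm_neg, norm_one, Real.norm_of_nonneg (Real.rpow_nonneg hu.le _),
    Real.rpow_neg hu.le, Real.norm_of_nonpos (by linarith), one_div]
  exact inv_anti₀ hpow hgu

theorem integrableOn_Ici_neg_one_div (hq : 0 < q) (hg_cont : ContinuousOn g (Ici 0))
    (hg_neg : ∀ y ∈ Ici (0 : ℝ), g y < 0) (hg_le : ∀ y ∈ Ici (0 : ℝ), g y ≤ -(y ^ (1 + q)))
    {x : ℝ} (hx : 0 ≤ x) : IntegrableOn (fun u ↦ -1 / g u) (Ici x) := by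
  have hsub : Ici x ⊆ Ici 0 := Ici_subset_Ici.2 hx
  have hcont : ContinuousOn (fun u ↦ -1 / g u) (Ici x) :=
    continuousOn_const.div (hg_cont.mono hsub) fun u hu ↦ (hg_neg u (hsub hu)).ne
  exact (hcont.locallyIntegrableOn measurableSet_Ici).integrableOn_of_isBigO_atTop
    (neg_one_div_isBigO_rpow hg_le) (integrableAtFilter_rpow_atTop_iff.2 (by linarith))

theorem antitoneOn_neg_one_div (hg_anti : AntitoneOn g (Ici 0))
    (hg_neg : ∀ y ∈ Ici (0 : ℝ), g y < 0) : AntitoneOn (fun u ↦ -1 / g u) (Ici 0) := by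
  intro a ha b hb hab
  simp only [neg_div, neg_le_neg_iff]
  exact one_div_le_one_div_of_neg_of_le (hg_neg a ha) (hg_anti ha hb hab)

end

theorem stmt_8_general (q : ℝ) (hq : 0 < q) (g : ℝ → ℝ)
    (hg_cont : ContinuousOn g (Ici 0))
    (hg_anti : StrictAntiOn g (Ici 0))
    (hg_neg : ∀ y ∈ Ici (0 : ℝ), g y < 0)
    (hg_le : ∀ y ∈ Ici (0 : ℝ), g y ≤ -(y ^ (1 + q)))
    (hbij : Set.BijOn g (Ici 0) (Iic (g 0)))
    (ginv : ℝ → ℝ) (hinv : Set.InvOn ginv g (Ici 0) (Iic (g 0)))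
    (Θ : ℝ → ℝ) (hΘ : ∀ x ∈ Ici (0 : ℝ), Θ x = ∫ u in Ici x, -1 / g u)
    (y κ : ℝ) (hrange : g y / (1 + κ) ≤ g 0) :
    -y ≤ ginv (g y / (1 + κ)) - y ∧
      ∀ u : ℝ, -y ≤ u →
        Θ (y + (ginv (g y / (1 + κ)) - y)) - Θ y -
            1 / g y * (1 + κ) * (ginv (g y / (1 + κ)) - y)
          ≤ Θ (y + u) - Θ y - 1 / g y * (1 + κ) * u := by
  set c := g y / (1 + κ)
  have hstar : 0 ≤ ginv c := hinv.1.mapsTo hbij.surjOn hrange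
  have hg_star : g (ginv c) = c := hinv.2 hrange
  have hcoef : 1 / g y * (1 + κ) = 1 / c := by
    rw [one_div_div]
    ring
  refine ⟨by linarith, fun u hu ↦ ?_⟩
  have hx : 0 ≤ y + u := by linarith
  have htangent : (ginv c - (y + u)) * (-1 / g (ginv c)) ≤ Θ (y + u) - Θ (ginv c) := by
    rw [hΘ _ hx, hΘ _ hstar, intervalIntegral.integral_Ici_sub_Ici'
      (integrableOn_Ici_neg_one_div hq hg_cont hg_neg hg_le hx)
      (integrableOn_Ici_neg_one_div hq hg_cont hg_neg hg_le hstar)]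
    exact ((antitoneOn_neg_one_div hg_anti.antitoneOn hg_neg).mono
      fun t ht ↦ le_trans (le_min hx hstar) ht.1).mul_le_intervalIntegral
  rw [hg_star] at htangent
  rw [add_sub_cancel, hcoef]
  linarith [show (ginv c - (y + u)) * (-1 / c) = 1 / c * u - 1 / c * (ginv c - y) by ring]

/-- `u* := g⁻¹(g(y)/(1+κ)) − y` satisfies `u* ≥ −y` and is a global minimizer on
`[−y, ∞)` of `u ↦ Θ(y+u) − Θ(y) − (1/g(y))·(1+κ)·u`. -/
theorem stmt_8 (q : ℝ) (hq : 0 < q) (g : ℝ → ℝ)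
    (hg_cont : ContinuousOn g (Ici 0))
    (hg_anti : StrictAntiOn g (Ici 0))
    (hg_neg : ∀ y ∈ Ici (0 : ℝ), g y < 0)
    (hg_le : ∀ y ∈ Ici (0 : ℝ), g y ≤ -(y ^ (1 + q)))
    (hbij : Set.BijOn g (Ici 0) (Iic (g 0)))
    (ginv : ℝ → ℝ) (hinv : Set.InvOn ginv g (Ici 0) (Iic (g 0)))
    (Θ : ℝ → ℝ) (hΘ : ∀ x ∈ Ici (0 : ℝ), Θ x = ∫ u in Ici x, -1 / g u)
    (y κ : ℝ) (hy : 0 ≤ y) (hκ : -1 < κ) (hrange : g y / (1 + κ) ≤ g 0) :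
    -y ≤ ginv (g y / (1 + κ)) - y ∧
      ∀ u : ℝ, -y ≤ u →
        Θ (y + (ginv (g y / (1 + κ)) - y)) - Θ y -
            1 / g y * (1 + κ) * (ginv (g y / (1 + κ)) - y)
          ≤ Θ (y + u) - Θ y - 1 / g y * (1 + κ) * u :=
  stmt_8_general q hq g hg_cont hg_anti hg_neg hg_le hbij ginv hinv Θ hΘ y κ hrange
end

section
/- Let S ⊆ ℝ^d be a closed set, let β : ℝ^d → ℝ^d satisfy ‖β(x) − β(x')‖ ≤ K‖x − x'‖ for all x, x' (with K ≥ 0), and let ν > 0 be such that: (i) for every x ∈ S, x + β(x) ∈ S; and (ii) for every x in the topological boundary ∂S of S, the distance from x + β(x) to ∂S is at least ν. Let ε > 0 with (1+K)ε < ν. If z ∉ S and there exists x ∈ ∂S with ‖z − x‖ ≤ ε, then z + β(z) ∈ S. -/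
/-!
The jump `x ↦ x + β x` is `(1 + K)`-Lipschitz, so it moves `z` to within `(1 + K) ε < ν` of
`x + β x ∈ S`. A point of `S` is at least as close to the frontier of `S` as to any point
outside `S`, and `x + β x` is at distance `≥ ν` from the frontier, so `z + β z` cannot lie
outside `S`.
-/

open Set Metric

theorem infDist_frontier_le_dist_of_mem_of_notMem {E : Type*} [NormedAddCommGroup E]
    [NormedSpace ℝ E] [FiniteDimensional ℝ E] {s : Set E} {a b : E} (ha : a ∈ s)
    (hb : b ∉ s) : infDist a (frontier s) ≤ dist a b := by
  obtain ⟨y, hy, hdist⟩ :=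
    exists_mem_frontier_infDist_compl_eq_dist ha ((ne_univ_iff_exists_notMem s).2 ⟨b, hb⟩)
  calc infDist a (frontier s) ≤ dist a y := infDist_le_dist_of_mem hy
    _ = infDist a sᶜ := hdist.symm
    _ ≤ dist a b := infDist_le_dist_of_mem hb

theorem dist_add_apply_le_of_norm_sub_le {E : Type*} [SeminormedAddCommGroup E] {f : E → E}
    {K : ℝ} (hf : ∀ x y, ‖f x - f y‖ ≤ K * ‖x - y‖) (x y : E) :
    dist (x + f x) (y + f y) ≤ (1 + K) * dist x y := by
  rw [dist_eq_norm, dist_eq_norm, add_sub_add_comm]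
  calc ‖(x - y) + (f x - f y)‖ ≤ ‖x - y‖ + ‖f x - f y‖ := norm_add_le _ _
    _ ≤ ‖x - y‖ + K * ‖x - y‖ := by gcongr; exact hf x y
    _ = (1 + K) * ‖x - y‖ := by ring

theorem stmt_10_general {d : ℕ} (S : Set (EuclideanSpace ℝ (Fin d))) (hS : IsClosed S)
    (β : EuclideanSpace ℝ (Fin d) → EuclideanSpace ℝ (Fin d))
    (K : ℝ) (hK : 0 ≤ K)
    (hβ : ∀ x x', ‖β x - β x'‖ ≤ K * ‖x - x'‖)
    (ν : ℝ)
    (hS_inv : ∀ x ∈ S, x + β x ∈ S)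
    (hbd : ∀ x ∈ frontier S, ν ≤ Metric.infDist (x + β x) (frontier S))
    (ε : ℝ) (hεν : (1 + K) * ε < ν)
    (z : EuclideanSpace ℝ (Fin d))
    (x : EuclideanSpace ℝ (Fin d)) (hx : x ∈ frontier S) (hzx : ‖z - x‖ ≤ ε) :
    z + β z ∈ S := by
  by_contra hout
  have hjump : x + β x ∈ S := hS_inv x (hS.frontier_subset hx)
  have hxz : dist x z ≤ ε := by rwa [dist_comm, dist_eq_norm]
  have : ν < ν := calc
    ν ≤ infDist (x + β x) (frontier S) := hbd x hx
    _ ≤ dist (x + β x) (z + β z) := infDist_frontier_le_dist_of_mem_of_notMem hjump hout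
    _ ≤ (1 + K) * dist x z := dist_add_apply_le_of_norm_sub_le hβ x z
    _ ≤ (1 + K) * ε := by gcongr
    _ < ν := hεν
  exact this.false

/-- Geometric core of Lemma 4.2: under the invariance conditions (E) on the closed set `S`
and the Lipschitz jump map `β`, a point `z ∉ S` at distance at most `ε` from the boundary
of `S` (with `(1+K)ε < ν`) is sent into `S` by the jump, i.e. `z + β(z) ∈ S`. -/
theorem stmt_10 {d : ℕ} (S : Set (EuclideanSpace ℝ (Fin d))) (hS : IsClosed S)
    (β : EuclideanSpace ℝ (Fin d) → EuclideanSpace ℝ (Fin d))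
    (K : ℝ) (hK : 0 ≤ K)
    (hβ : ∀ x x', ‖β x - β x'‖ ≤ K * ‖x - x'‖)
    (ν : ℝ) (hν : 0 < ν)
    (hS_inv : ∀ x ∈ S, x + β x ∈ S)
    (hbd : ∀ x ∈ frontier S, ν ≤ Metric.infDist (x + β x) (frontier S))
    (ε : ℝ) (hε : 0 < ε) (hεν : (1 + K) * ε < ν)
    (z : EuclideanSpace ℝ (Fin d)) (hz : z ∉ S)
    (x : EuclideanSpace ℝ (Fin d)) (hx : x ∈ frontier S) (hzx : ‖z - x‖ ≤ ε) :
    z + β z ∈ S :=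
  stmt_10_general S hS β K hK hβ ν hS_inv hbd ε hεν z x hx hzx
end
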